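/- Let f : ℝ³ → ℂ be continuously differentiable and compactly supported, and let u_f(t,x) := (t/4π) ∫_{S²} f(x + tω) dσ(ω) be the free sine wave propagator applied to f. Then for every t > 0 and every x ∈ ℝ³, |u_f(t,x)| ≤ ‖∇f‖_{L¹(ℝ³)}/(4π t); that is, the dispersive estimate ‖ sin(t√(−Δ))/√(−Δ) f ‖_{L^∞_x} ≲ t^{−1} ‖∇f‖_{L¹} holds. -/

import Mathlib

set_option autoImplicit false

open MeasureTheory ENNReal Real

noncomputable section

/-- `ℝ³` as a Euclidean space. -/
abbrev R3 : Type := EuclideanSpace ℝ (Fin 3)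

/-- The surface measure on the unit sphere `S² ⊂ ℝ³`. -/
def sphereMeasure : Measure (Metric.sphere (0 : R3) 1) :=
  (volume : Measure R3).toSphere

/-- The free sine wave propagator (Kirchhoff formula):
`u_f(t,x) = (t/4π) ∫_{S²} f(x + tω) dσ(ω)`. -/
def sinProp (f : R3 → ℂ) (t : ℝ) (x : R3) : ℂ :=
  (t / (4 * π)) • ∫ ω : Metric.sphere (0 : R3) 1, f (x + t • (ω : R3)) ∂sphereMeasure

/-! Along a unit ray from `x`, the fundamental theorem of calculus and the compact support of `f`
give `|f (x + t ω)| ≤ ∫_t^∞ |∇f (x + s ω)| ds ≤ t⁻² ∫_0^∞ s² |∇f (x + s ω)| ds`. Integrating over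
`ω ∈ S²` turns the right-hand side, in polar coordinates centred at `x`, into `t⁻² ‖∇f‖_{L¹}`,
and the prefactor `t / 4π` of the Kirchhoff formula leaves `‖∇f‖_{L¹} / (4π t)`. -/

open Set Metric

section PolarCoordinates

variable {E : Type*} [NormedAddCommGroup E] [NormedSpace ℝ E] [FiniteDimensional ℝ E]
  [Nontrivial E] [MeasurableSpace E] [BorelSpace E] (μ : Measure E) [μ.IsAddHaarMeasure]

theorem lintegral_eq_lintegral_toSphere_lintegral_Ioi {G : E → ℝ≥0∞} (hG : Measurable G) :
    ∫⁻ y, G y ∂μ = ∫⁻ ω : sphere (0 : E) 1, (∫⁻ r in Ioi (0 : ℝ),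
      ENNReal.ofReal (r ^ (Module.finrank ℝ E - 1)) * G (r • (ω : E))) ∂μ.toSphere := by
  have hGm : Measurable fun p : sphere (0 : E) 1 × Ioi (0 : ℝ) => G ((p.2 : ℝ) • (p.1 : E)) :=
    hG.comp (by fun_prop)
  calc ∫⁻ y, G y ∂μ
      = ∫⁻ y : ({0}ᶜ : Set E), G y ∂(μ.comap (↑)) := by
        rw [lintegral_subtype_comap (measurableSet_singleton _).compl, restrict_compl_singleton]
    _ = ∫⁻ p : sphere (0 : E) 1 × Ioi (0 : ℝ), G ((p.2 : ℝ) • (p.1 : E))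
          ∂(μ.toSphere.prod (Measure.volumeIoiPow (Module.finrank ℝ E - 1))) := by
        rw [← μ.measurePreserving_homeomorphUnitSphereProd.lintegral_comp hGm]
        refine lintegral_congr fun y => ?_
        simp [smul_inv_smul₀ (norm_ne_zero_iff.2 y.2)]
    _ = ∫⁻ ω : sphere (0 : E) 1, (∫⁻ r : Ioi (0 : ℝ), G ((r : ℝ) • (ω : E))
          ∂(Measure.volumeIoiPow (Module.finrank ℝ E - 1))) ∂μ.toSphere :=
        lintegral_prod _ hGm.aemeasurable
    _ = _ := by
        refine lintegral_congr fun ω => ?_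
        have hGω : Measurable fun r : Ioi (0 : ℝ) => G ((r : ℝ) • (ω : E)) := hG.comp (by fun_prop)
        rw [Measure.volumeIoiPow, lintegral_withDensity_eq_lintegral_mul _
          (f := fun r : Ioi (0 : ℝ) => ENNReal.ofReal ((r : ℝ) ^ (Module.finrank ℝ E - 1)))
          (by fun_prop) hGω,
          ← lintegral_subtype_comap measurableSet_Ioi
          (fun r : ℝ => ENNReal.ofReal (r ^ _) * G (r • (ω : E)))]
        rfl

end PolarCoordinates

theorem setLIntegral_Ioi_le_inv_mul_setLIntegral_Ioi_pow_mul (g : ℝ → ℝ≥0∞) {t : ℝ}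
    (ht : 0 < t) (k : ℕ) :
    ∫⁻ s in Ioi t, g s ≤
      (ENNReal.ofReal (t ^ k))⁻¹ * ∫⁻ s in Ioi 0, ENNReal.ofReal (s ^ k) * g s := by
  have htk : ENNReal.ofReal (t ^ k) ≠ 0 := by simp [ht]
  calc ∫⁻ s in Ioi t, g s
      = ∫⁻ s in Ioi t, (ENNReal.ofReal (t ^ k))⁻¹ * (ENNReal.ofReal (t ^ k) * g s) := by
        simp_rw [← mul_assoc, ENNReal.inv_mul_cancel htk ofReal_ne_top, one_mul]
    _ ≤ ∫⁻ s in Ioi t, (ENNReal.ofReal (t ^ k))⁻¹ * (ENNReal.ofReal (s ^ k) * g s) := by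
        refine setLIntegral_mono' measurableSet_Ioi fun s hs => ?_
        gcongr
        exact hs.le
    _ ≤ (ENNReal.ofReal (t ^ k))⁻¹ * ∫⁻ s in Ioi 0, ENNReal.ofReal (s ^ k) * g s := by
        rw [lintegral_const_mul' _ _ (ENNReal.inv_ne_top.2 htk)]
        exact mul_le_mul_right (lintegral_mono_set (Ioi_subset_Ioi ht.le)) _

section CompactlySupported

variable {E F : Type*} [NormedAddCommGroup E] [NormedSpace ℝ E]
  [NormedAddCommGroup F] [NormedSpace ℝ F] [CompleteSpace F] {f : E → F}

theorem HasCompactSupport.enorm_le_lintegral_Ioi_enorm_fderiv (hf : ContDiff ℝ 1 f)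
    (hsupp : HasCompactSupport f) (x : E) {v : E} (hv : v ≠ 0) (t : ℝ) :
    ‖f (x + t • v)‖ₑ ≤ (∫⁻ s in Ioi t, ‖fderiv ℝ f (x + s • v)‖ₑ) * ‖v‖ₑ := by
  have hline : Topology.IsClosedEmbedding fun s : ℝ => x + s • v :=
    (Homeomorph.addLeft x).isClosedEmbedding.comp (isClosedEmbedding_smul_left hv)
  have hφ : ContDiff ℝ 1 fun s : ℝ => f (x + s • v) :=
    hf.comp (contDiff_const.add (contDiff_id.smul contDiff_const))
  have hderiv (s : ℝ) : deriv (fun s : ℝ => f (x + s • v)) s = fderiv ℝ f (x + s • v) v := by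
    have hline' : HasDerivAt (fun s : ℝ => x + s • v) v s := by
      simpa using ((hasDerivAt_id s).smul_const v).const_add x
    exact ((hf.differentiable one_ne_zero _).hasFDerivAt.comp_hasDerivAt s hline').deriv
  calc ‖f (x + t • v)‖ₑ
      = ‖∫ s in Ioi t, deriv (fun s : ℝ => f (x + s • v)) s‖ₑ := by
        rw [(hsupp.comp_isClosedEmbedding hline).integral_Ioi_deriv_eq hφ, enorm_neg]
    _ ≤ ∫⁻ s in Ioi t, ‖fderiv ℝ f (x + s • v) v‖ₑ := by
        simpa only [hderiv] using enorm_integral_le_lintegral_enorm _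
    _ ≤ ∫⁻ s in Ioi t, ‖fderiv ℝ f (x + s • v)‖ₑ * ‖v‖ₑ :=
        lintegral_mono fun s => (fderiv ℝ f (x + s • v)).le_opENorm v
    _ = _ := lintegral_mul_const' _ _ enorm_ne_top

end CompactlySupported

section SphericalMeans

variable {E F : Type*} [NormedAddCommGroup E] [NormedSpace ℝ E] [FiniteDimensional ℝ E]
  [Nontrivial E] [MeasurableSpace E] [BorelSpace E] (μ : Measure E) [μ.IsAddHaarMeasure]
  [NormedAddCommGroup F] [NormedSpace ℝ F] [CompleteSpace F] {f : E → F}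

theorem HasCompactSupport.lintegral_toSphere_enorm_le (hf : ContDiff ℝ 1 f)
    (hsupp : HasCompactSupport f) (x : E) {t : ℝ} (ht : 0 < t) :
    ∫⁻ ω : sphere (0 : E) 1, ‖f (x + t • (ω : E))‖ₑ ∂μ.toSphere ≤
      (ENNReal.ofReal (t ^ (Module.finrank ℝ E - 1)))⁻¹ * ∫⁻ y, ‖fderiv ℝ f y‖ₑ ∂μ := by
  set k := Module.finrank ℝ E - 1
  have hG : Measurable fun y => ‖fderiv ℝ f (x + y)‖ₑ :=
    ((hf.continuous_fderiv one_ne_zero).comp (continuous_const_add x)).enorm.measurable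
  calc ∫⁻ ω : sphere (0 : E) 1, ‖f (x + t • (ω : E))‖ₑ ∂μ.toSphere
      ≤ ∫⁻ ω : sphere (0 : E) 1, (∫⁻ s in Ioi t, ‖fderiv ℝ f (x + s • (ω : E))‖ₑ) ∂μ.toSphere := by
        refine lintegral_mono fun ω => ?_
        have hω : ‖(ω : E)‖ₑ = 1 := by rw [← ofReal_norm, norm_eq_of_mem_sphere, ofReal_one]
        simpa only [hω, mul_one] using
          hsupp.enorm_le_lintegral_Ioi_enorm_fderiv hf x (ne_zero_of_mem_unit_sphere ω) t
    _ ≤ ∫⁻ ω : sphere (0 : E) 1, (ENNReal.ofReal (t ^ k))⁻¹ * (∫⁻ s in Ioi 0,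
          ENNReal.ofReal (s ^ k) * ‖fderiv ℝ f (x + s • (ω : E))‖ₑ) ∂μ.toSphere :=
        lintegral_mono fun ω => setLIntegral_Ioi_le_inv_mul_setLIntegral_Ioi_pow_mul _ ht k
    _ = (ENNReal.ofReal (t ^ k))⁻¹ * ∫⁻ y, ‖fderiv ℝ f (x + y)‖ₑ ∂μ := by
        rw [lintegral_const_mul' _ _ (ENNReal.inv_ne_top.2 (by simp [ht])),
          lintegral_eq_lintegral_toSphere_lintegral_Ioi μ hG]
    _ = (ENNReal.ofReal (t ^ k))⁻¹ * ∫⁻ y, ‖fderiv ℝ f y‖ₑ ∂μ := by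
        rw [lintegral_add_left_eq_self (fun y => ‖fderiv ℝ f y‖ₑ) x]

theorem HasCompactSupport.norm_integral_toSphere_le (hf : ContDiff ℝ 1 f)
    (hsupp : HasCompactSupport f) (x : E) {t : ℝ} (ht : 0 < t) :
    ‖∫ ω : sphere (0 : E) 1, f (x + t • (ω : E)) ∂μ.toSphere‖ ≤
      (t ^ (Module.finrank ℝ E - 1))⁻¹ * ∫ y, ‖fderiv ℝ f y‖ ∂μ := by
  have hint : Integrable (fderiv ℝ f) μ :=
    (hf.continuous_fderiv one_ne_zero).integrable_of_hasCompactSupport (hsupp.fderiv ℝ)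
  have h :=
    (enorm_integral_le_lintegral_enorm _).trans (hsupp.lintegral_toSphere_enorm_le μ hf x ht)
  rw [integral_norm_eq_lintegral_enorm hint.aestronglyMeasurable]
  have := ENNReal.toReal_mono (ENNReal.mul_ne_top (ENNReal.inv_ne_top.2 (by simp [ht]))
    hint.hasFiniteIntegral.ne) h
  simpa [ENNReal.toReal_mul, ENNReal.toReal_inv, ht.le] using this

end SphericalMeans

theorem sine_dispersive_estimate (f : R3 → ℂ) (hf : ContDiff ℝ 1 f)
    (hsupp : HasCompactSupport f) :
    ∀ t : ℝ, 0 < t → ∀ x : R3,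
      ‖sinProp f t x‖ ≤ (∫ y : R3, ‖fderiv ℝ f y‖) / (4 * π * t) := by
  intro t ht x
  have h := hsupp.norm_integral_toSphere_le volume hf x ht
  rw [finrank_euclideanSpace_fin] at h
  rw [sinProp, norm_smul, Real.norm_eq_abs, abs_of_pos (by positivity)]
  calc t / (4 * π) * ‖∫ ω : sphere (0 : R3) 1, f (x + t • (ω : R3)) ∂sphereMeasure‖
      ≤ t / (4 * π) * ((t ^ 2)⁻¹ * ∫ y : R3, ‖fderiv ℝ f y‖) :=
        mul_le_mul_of_nonneg_left h (by positivity)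
    _ = (∫ y : R3, ‖fderiv ℝ f y‖) / (4 * π * t) := by
        field_simp
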